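/- For every 0 ≤ λ < √(μ/2), the function u(x) = √(μ/2)(3 tanh²((2μ)^{1/4} x + tanh^{-1}√(2/3 + (1/3)√(2/μ) λ)) - 2), defined for x > 0, solves (1/2)u'' = 2u² - μ on (0,∞) with u(0) = λ and lim_{x→∞} u(x) = √(μ/2). -/

import Mathlib

/-!
With `T = tanh (c x + a)` one has `T' = c (1 - T²)`, so the profile `u = s (3T² - 2)` satisfies
`u'' = 6 s c² (1 - T²)(1 - 3T²)`; as polynomials in `T²` this equals `4u² - 4s²` exactly when
`c² = 2s`. The choice `s = √(μ/2)`, `c = (2μ)^{1/4}` gives `c² = 2s` and `4s² = 2μ`. Since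
`tanh → 1`, `u → s` at infinity, and the phase `a = artanh √y` makes `tanh² a = y`, so that
`u(0) = s (3y - 2) = λ` for `y = 2/3 + (1/3)√(2/μ) λ`.
-/

open Real Filter

/-- Inverse hyperbolic tangent on `(-1, 1)`. -/
noncomputable def artanh (y : ℝ) : ℝ := (1/2) * Real.log ((1 + y) / (1 - y))

open Set Topology

theorem hasDerivAt_tanh (x : ℝ) : HasDerivAt tanh (1 - tanh x ^ 2) x := by
  have h := (hasDerivAt_sinh x).div (hasDerivAt_cosh x) (cosh_pos x).ne'
  rw [show sinh / cosh = tanh from funext fun y => (tanh_eq_sinh_div_cosh y).symm] at h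
  refine h.congr_deriv ?_
  rw [tanh_eq_sinh_div_cosh]
  field_simp

theorem tanh_eq_one_sub_exp_div (x : ℝ) :
    tanh x = (1 - exp (-2 * x)) / (1 + exp (-2 * x)) := by
  have hx : exp (-2 * x) = exp (-x) * exp (-x) := by rw [← exp_add]; ring_nf
  rw [tanh_eq, hx, exp_neg]
  field_simp

theorem tendsto_tanh_atTop : Tendsto tanh atTop (𝓝 1) := by
  have hexp : Tendsto (fun x : ℝ => exp (-2 * x)) atTop (𝓝 0) :=
    tendsto_exp_atBot.comp (tendsto_id.const_mul_atTop_of_neg (by norm_num))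
  have h := ((tendsto_const_nhds (x := (1:ℝ))).sub hexp).div
    (tendsto_const_nhds.add hexp) (by norm_num : (1:ℝ) + 0 ≠ 0)
  rw [sub_zero, add_zero, div_one] at h
  exact h.congr fun x => (tanh_eq_one_sub_exp_div x).symm

theorem tanh_artanh_of_mem_Ioo {y : ℝ} (hy : y ∈ Ioo (-1) 1) : tanh (_root_.artanh y) = y := by
  rw [_root_.artanh, ← artanh_eq_half_log (Ioo_subset_Icc_self hy), Real.tanh_artanh hy]

theorem sq_tanh_artanh_sqrt {y : ℝ} (h0 : 0 ≤ y) (h1 : y < 1) :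
    tanh (_root_.artanh √y) ^ 2 = y := by
  have hy : √y ∈ Ioo (-1) 1 := ⟨by linarith [sqrt_nonneg y], (sqrt_lt' one_pos).2 (by linarith)⟩
  rw [tanh_artanh_of_mem_Ioo hy, sq_sqrt h0]

theorem rpow_one_fourth_sq {x : ℝ} (hx : 0 ≤ x) : (x ^ ((1:ℝ)/4)) ^ 2 = √x := by
  rw [← rpow_natCast, ← rpow_mul hx, sqrt_eq_rpow]
  norm_num

noncomputable def tanhProfile (s c a x : ℝ) : ℝ := s * (3 * tanh (c * x + a) ^ 2 - 2)

noncomputable def tanhProfileDeriv (s c a x : ℝ) : ℝ :=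
  6 * s * c * (tanh (c * x + a) * (1 - tanh (c * x + a) ^ 2))

theorem hasDerivAt_tanh_mul_add (c a x : ℝ) :
    HasDerivAt (fun x => tanh (c * x + a)) ((1 - tanh (c * x + a) ^ 2) * c) x := by
  have hin : HasDerivAt (fun x => c * x + a) c x := by
    simpa using ((hasDerivAt_id x).const_mul c).add_const a
  exact (hasDerivAt_tanh _).comp x hin

theorem hasDerivAt_tanhProfile (s c a x : ℝ) :
    HasDerivAt (tanhProfile s c a) (tanhProfileDeriv s c a x) x := by
  have h := (((hasDerivAt_tanh_mul_add c a x).fun_pow 2).const_mul 3 |>.sub_const 2).const_mul s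
  refine h.congr_deriv ?_
  norm_num [tanhProfileDeriv]
  ring

theorem hasDerivAt_tanhProfileDeriv {s c : ℝ} (hc : c ^ 2 = 2 * s) (a x : ℝ) :
    HasDerivAt (tanhProfileDeriv s c a) (4 * tanhProfile s c a x ^ 2 - 4 * s ^ 2) x := by
  have hT := hasDerivAt_tanh_mul_add c a x
  have h := (hT.mul ((hT.fun_pow 2).const_sub 1)).const_mul (6 * s * c)
  refine h.congr_deriv ?_
  norm_num [tanhProfile]
  linear_combination (6 * s * (1 - tanh (c * x + a) ^ 2) * (1 - 3 * tanh (c * x + a) ^ 2)) * hc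

theorem tanhProfile_zero (s c a : ℝ) : tanhProfile s c a 0 = s * (3 * tanh a ^ 2 - 2) := by
  simp [tanhProfile]

theorem tendsto_tanhProfile_atTop (s a : ℝ) {c : ℝ} (hc : 0 < c) :
    Tendsto (tanhProfile s c a) atTop (𝓝 s) := by
  have hT : Tendsto (fun x => tanh (c * x + a)) atTop (𝓝 1) :=
    tendsto_tanh_atTop.comp (tendsto_atTop_add_const_right _ a (tendsto_id.const_mul_atTop hc))
  have h := (((hT.pow 2).const_mul 3).sub_const 2).const_mul s
  norm_num at h
  exact h

/-- For `0 ≤ λ < √(μ/2)`, `u(x) = √(μ/2)(3 tanh²((2μ)^{1/4} x + artanh √(2/3 + (1/3)√(2/μ)λ)) - 2)`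
solves `(1/2)u'' = 2u² - μ` on `(0,∞)` with `u(0) = λ` and `u(∞) = √(μ/2)`. -/
theorem stmt_10 (μ lam : ℝ) (hμ : 0 < μ) (hlam0 : 0 ≤ lam) (hlam : lam < Real.sqrt (μ/2)) :
    ∀ u : ℝ → ℝ,
      (∀ x : ℝ, u x = Real.sqrt (μ/2) *
        (3 * (Real.tanh ((2*μ) ^ ((1:ℝ)/4) * x
          + _root_.artanh (Real.sqrt (2/3 + (1/3) * Real.sqrt (2/μ) * lam)))) ^ 2 - 2)) →
      ∃ u' : ℝ → ℝ,
        (∀ x : ℝ, 0 < x →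
          HasDerivAt u (u' x) x ∧ HasDerivAt u' (4 * (u x) ^ 2 - 2 * μ) x) ∧
        u 0 = lam ∧
        Tendsto u atTop (nhds (Real.sqrt (μ/2))) := by
  intro u hu
  set s := √(μ / 2)
  set c := (2 * μ) ^ ((1:ℝ) / 4)
  set k := √(2 / μ)
  rw [show u = tanhProfile s c (_root_.artanh √(2 / 3 + 1 / 3 * k * lam)) from funext hu]
  have hs : s ^ 2 = μ / 2 := sq_sqrt (by positivity)
  have hc : c ^ 2 = 2 * s := by
    rw [rpow_one_fourth_sq (by positivity), show 2 * μ = 2 ^ 2 * (μ / 2) by ring,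
      sqrt_mul (by positivity), sqrt_sq zero_le_two]
  have hks : k * s = 1 := by
    rw [← sqrt_mul (by positivity), div_mul_div_comm, mul_comm 2 μ, div_self (by positivity),
      sqrt_one]
  have hklam : k * lam < 1 := hks ▸ mul_lt_mul_of_pos_left hlam (sqrt_pos.2 (by positivity))
  refine ⟨tanhProfileDeriv s c _, fun x _ => ⟨hasDerivAt_tanhProfile s c _ x, ?_⟩, ?_,
    tendsto_tanhProfile_atTop s _ (by positivity)⟩
  · convert hasDerivAt_tanhProfileDeriv hc _ x using 2
    rw [hs]
    ring
  · rw [tanhProfile_zero, sq_tanh_artanh_sqrt (by positivity) (by linarith)]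
    linear_combination lam * hks
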